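/- Let l12, l13, l23 be positive reals satisfying the strict triangle inequalities, and for w ∈ ℝ³ let l̃ij = exp(wi+wj)·lij; on the open set U ⊆ ℝ³ where l̃ satisfies the strict triangle inequalities let θi(w) ∈ (0,π) be the inner angle at vertex i defined by the law of cosines. Then at every w ∈ U, ∂θ1/∂w1 = −(cot θ2 + cot θ3), and analogously ∂θi/∂wi = −(cot θj + cot θk) for each permutation (i,j,k) of (1,2,3). -/

import Mathlib

/-- Vertex-scaled edge length: `exp (w i + w j) * l i j`. -/
noncomputable def scaledLen (l : Fin 3 → Fin 3 → ℝ) (w : Fin 3 → ℝ) (i j : Fin 3) : ℝ :=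
  Real.exp (w i + w j) * l i j

/-- The inner angle at vertex `i` of the vertex-scaled triangle, by the law of cosines. -/
noncomputable def scaledAngle (l : Fin 3 → Fin 3 → ℝ) (i : Fin 3) (w : Fin 3 → ℝ) : ℝ :=
  Real.arccos ((scaledLen l w i (i + 1) ^ 2 + scaledLen l w i (i + 2) ^ 2
      - scaledLen l w (i + 1) (i + 2) ^ 2) /
    (2 * scaledLen l w i (i + 1) * scaledLen l w i (i + 2)))

/-!
Write `a`, `b` for the two sides at vertex `i` and `c` for the opposite one. Moving `w` along
`Pi.single i 1` scales `a` and `b` by `exp t` and fixes `c`, so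
`cos θᵢ = (a² + b²) / (2ab) - c² exp (-2t) / (2ab)` has derivative `c² / (ab)` at `t = 0`.
With Heron's product `H` one has `sin θᵢ = √H / (2ab)`, hence
`∂θᵢ/∂wᵢ = -2c² / √H`. On the other hand `cot θ = (u² + v² - opposite²) / √H` at every vertex,
so `cot θⱼ + cot θₖ = ((c² + a² - b²) + (b² + c² - a²)) / √H = 2c² / √H`.
-/

open Real Set

noncomputable def cosAngle (a b c : ℝ) : ℝ := (a ^ 2 + b ^ 2 - c ^ 2) / (2 * a * b)

/-- `16 * area ^ 2`, by Heron's formula. -/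
def heron (a b c : ℝ) : ℝ := (a + b + c) * (-a + b + c) * (a - b + c) * (a + b - c)

section Triangle

variable {a b c : ℝ}

lemma heron_rotate (a b c : ℝ) : heron b c a = heron a b c := by
  unfold heron; ring

lemma heron_pos (hc : c < a + b) (ha : a < b + c) (hb : b < c + a) : 0 < heron a b c := by
  unfold heron
  have hsum : 0 < a + b + c := by linarith
  exact mul_pos (mul_pos (mul_pos hsum (by linarith)) (by linarith)) (by linarith)

lemma one_sub_cosAngle_sq (ha : a ≠ 0) (hb : b ≠ 0) :
    1 - cosAngle a b c ^ 2 = heron a b c / (2 * a * b) ^ 2 := by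
  unfold cosAngle heron
  field_simp
  ring

lemma cosAngle_mem_Ioo (hc : c < a + b) (ha : a < b + c) (hb : b < c + a) :
    cosAngle a b c ∈ Ioo (-1) 1 := by
  have hsq : cosAngle a b c ^ 2 < 1 := by
    have hpos : 0 < heron a b c / (2 * a * b) ^ 2 := by
      have := heron_pos hc ha hb
      have : a ≠ 0 := by linarith
      have : b ≠ 0 := by linarith
      positivity
    rw [← one_sub_cosAngle_sq (by linarith) (by linarith)] at hpos
    linarith
  exact abs_lt.1 ((sq_lt_one_iff_abs_lt_one _).1 hsq)

lemma sin_arccos_cosAngle (hc : c < a + b) (ha : a < b + c) (hb : b < c + a) :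
    sin (arccos (cosAngle a b c)) = √(heron a b c) / (2 * a * b) := by
  have hab : 0 < 2 * a * b := by
    have : 0 < a := by linarith
    have : 0 < b := by linarith
    positivity
  rw [sin_arccos, one_sub_cosAngle_sq (by linarith) (by linarith), sqrt_div' _ (by positivity),
    sqrt_sq hab.le]

lemma cot_arccos_cosAngle (hc : c < a + b) (ha : a < b + c) (hb : b < c + a) :
    cot (arccos (cosAngle a b c)) = (a ^ 2 + b ^ 2 - c ^ 2) / √(heron a b c) := by
  have hx := cosAngle_mem_Ioo hc ha hb
  have : a ≠ 0 := by linarith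
  have : b ≠ 0 := by linarith
  have : √(heron a b c) ≠ 0 := (sqrt_pos.2 (heron_pos hc ha hb)).ne'
  rw [cot_eq_cos_div_sin, cos_arccos hx.1.le hx.2.le, sin_arccos_cosAngle hc ha hb, cosAngle]
  field_simp

lemma hasDerivAt_cosAngle_exp_mul (ha : a ≠ 0) (hb : b ≠ 0) :
    HasDerivAt (fun t ↦ cosAngle (exp t * a) (exp t * b) c) (c ^ 2 / (a * b)) 0 := by
  have hfun : (fun t ↦ cosAngle (exp t * a) (exp t * b) c)
      = fun t ↦ (a ^ 2 + b ^ 2) / (2 * a * b) - c ^ 2 / (2 * a * b) * exp (-2 * t) := by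
    funext t
    rw [show -2 * t = -(2 * t) by ring, exp_neg, show 2 * t = t + t by ring, exp_add, cosAngle]
    field_simp
  rw [hfun]
  refine ((((hasDerivAt_id' 0).const_mul (-2)).exp.const_mul _).const_sub _).congr_deriv ?_
  field_simp
  norm_num

lemma hasDerivAt_arccos_cosAngle_exp_mul (hc : c < a + b) (ha : a < b + c) (hb : b < c + a) :
    HasDerivAt (fun t ↦ arccos (cosAngle (exp t * a) (exp t * b) c))
      (-(2 * c ^ 2) / √(heron a b c)) 0 := by
  have hx := cosAngle_mem_Ioo hc ha hb
  have ha0 : a ≠ 0 := by linarith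
  have hb0 : b ≠ 0 := by linarith
  have hH : √(heron a b c) ≠ 0 := (sqrt_pos.2 (heron_pos hc ha hb)).ne'
  have harccos := hasDerivAt_arccos hx.1.ne' hx.2.ne
  rw [← sin_arccos, sin_arccos_cosAngle hc ha hb] at harccos
  have h0 : cosAngle a b c = cosAngle (exp 0 * a) (exp 0 * b) c := by simp
  rw [h0] at harccos
  refine (harccos.comp (0 : ℝ) (hasDerivAt_cosAngle_exp_mul ha0 hb0)).congr_deriv ?_
  field_simp

end Triangle

namespace Fin3

lemma add_one_add_one (i : Fin 3) : i + 1 + 1 = i + 2 := by fin_cases i <;> rfl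

lemma add_one_add_two (i : Fin 3) : i + 1 + 2 = i := by fin_cases i <;> rfl

lemma add_two_add_one (i : Fin 3) : i + 2 + 1 = i := by fin_cases i <;> rfl

lemma add_two_add_two (i : Fin 3) : i + 2 + 2 = i + 1 := by fin_cases i <;> rfl

lemma add_one_ne_self (i : Fin 3) : i + 1 ≠ i := by fin_cases i <;> decide

lemma add_two_ne_self (i : Fin 3) : i + 2 ≠ i := by fin_cases i <;> decide

lemma eq_add_one_and_eq_add_two_or {i j k : Fin 3} (hij : i ≠ j) (hjk : j ≠ k) (hik : i ≠ k) :
    (j = i + 1 ∧ k = i + 2) ∨ (j = i + 2 ∧ k = i + 1) := by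
  revert i j k
  decide

end Fin3

open Fin3

section Scaled

variable {l : Fin 3 → Fin 3 → ℝ}

lemma scaledLen_comm (hsymm : ∀ i j, l i j = l j i) (w : Fin 3 → ℝ) (p q : Fin 3) :
    scaledLen l w p q = scaledLen l w q p := by
  rw [scaledLen, scaledLen, hsymm, add_comm]

@[fun_prop]
lemma differentiable_scaledLen (l : Fin 3 → Fin 3 → ℝ) (p q : Fin 3) :
    Differentiable ℝ (fun w ↦ scaledLen l w p q) := by
  unfold scaledLen
  fun_prop

lemma scaledLen_add_smul_single_self_left {i q : Fin 3} (hq : q ≠ i) (w : Fin 3 → ℝ) (t : ℝ) :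
    scaledLen l (w + t • Pi.single i 1) i q = exp t * scaledLen l w i q := by
  simp [scaledLen, hq, exp_add]
  ring

lemma scaledLen_add_smul_single_of_ne {i p q : Fin 3} (hp : p ≠ i) (hq : q ≠ i)
    (w : Fin 3 → ℝ) (t : ℝ) :
    scaledLen l (w + t • Pi.single i 1) p q = scaledLen l w p q := by
  simp [scaledLen, hp, hq]

lemma scaledAngle_eq_arccos_cosAngle (l : Fin 3 → Fin 3 → ℝ) (i : Fin 3) (w : Fin 3 → ℝ) :
    scaledAngle l i w = arccos (cosAngle (scaledLen l w i (i + 1)) (scaledLen l w i (i + 2))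
      (scaledLen l w (i + 1) (i + 2))) :=
  rfl

lemma scaledAngle_add_one (hsymm : ∀ i j, l i j = l j i) (i : Fin 3) (w : Fin 3 → ℝ) :
    scaledAngle l (i + 1) w = arccos (cosAngle (scaledLen l w (i + 1) (i + 2))
      (scaledLen l w i (i + 1)) (scaledLen l w i (i + 2))) := by
  rw [scaledAngle_eq_arccos_cosAngle, add_one_add_one, add_one_add_two,
    scaledLen_comm hsymm w (i + 1) i, scaledLen_comm hsymm w (i + 2) i]

lemma scaledAngle_add_two (hsymm : ∀ i j, l i j = l j i) (i : Fin 3) (w : Fin 3 → ℝ) :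
    scaledAngle l (i + 2) w = arccos (cosAngle (scaledLen l w i (i + 2))
      (scaledLen l w (i + 1) (i + 2)) (scaledLen l w i (i + 1))) := by
  rw [scaledAngle_eq_arccos_cosAngle, add_two_add_one, add_two_add_two,
    scaledLen_comm hsymm w (i + 2) i, scaledLen_comm hsymm w (i + 2) (i + 1)]

lemma scaledLen_triangle (hsymm : ∀ i j, l i j = l j i) {w : Fin 3 → ℝ}
    (hw : ∀ i : Fin 3,
      scaledLen l w (i + 1) (i + 2) < scaledLen l w i (i + 1) + scaledLen l w i (i + 2))
    (i : Fin 3) :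
    scaledLen l w (i + 1) (i + 2) < scaledLen l w i (i + 1) + scaledLen l w i (i + 2) ∧
    scaledLen l w i (i + 1) < scaledLen l w i (i + 2) + scaledLen l w (i + 1) (i + 2) ∧
    scaledLen l w i (i + 2) < scaledLen l w (i + 1) (i + 2) + scaledLen l w i (i + 1) := by
  have h1 := hw (i + 1)
  have h2 := hw (i + 2)
  rw [add_one_add_one, add_one_add_two, scaledLen_comm hsymm w (i + 2) i,
    scaledLen_comm hsymm w (i + 1) i] at h1
  rw [add_two_add_one, add_two_add_two, scaledLen_comm hsymm w (i + 2) i,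
    scaledLen_comm hsymm w (i + 2) (i + 1)] at h2
  exact ⟨hw i, by linarith, by linarith⟩

lemma differentiableAt_scaledAngle {w : Fin 3 → ℝ} {i : Fin 3}
    (hc : scaledLen l w (i + 1) (i + 2) < scaledLen l w i (i + 1) + scaledLen l w i (i + 2))
    (ha : scaledLen l w i (i + 1) < scaledLen l w i (i + 2) + scaledLen l w (i + 1) (i + 2))
    (hb : scaledLen l w i (i + 2) < scaledLen l w (i + 1) (i + 2) + scaledLen l w i (i + 1)) :
    DifferentiableAt ℝ (scaledAngle l i) w := by
  have hx := cosAngle_mem_Ioo hc ha hb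
  have ha0 : scaledLen l w i (i + 1) ≠ 0 := by linarith
  have hb0 : scaledLen l w i (i + 2) ≠ 0 := by linarith
  refine (differentiableAt_arccos.2 ⟨hx.1.ne', hx.2.ne⟩).comp w
    (f := fun v ↦ cosAngle (scaledLen l v i (i + 1)) (scaledLen l v i (i + 2))
      (scaledLen l v (i + 1) (i + 2))) ?_
  unfold cosAngle
  fun_prop (disch := simp [ha0, hb0])

lemma hasLineDerivAt_scaledAngle {w : Fin 3 → ℝ} {i : Fin 3}
    (hc : scaledLen l w (i + 1) (i + 2) < scaledLen l w i (i + 1) + scaledLen l w i (i + 2))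
    (ha : scaledLen l w i (i + 1) < scaledLen l w i (i + 2) + scaledLen l w (i + 1) (i + 2))
    (hb : scaledLen l w i (i + 2) < scaledLen l w (i + 1) (i + 2) + scaledLen l w i (i + 1)) :
    HasLineDerivAt ℝ (scaledAngle l i) (-(2 * scaledLen l w (i + 1) (i + 2) ^ 2) /
      √(heron (scaledLen l w i (i + 1)) (scaledLen l w i (i + 2)) (scaledLen l w (i + 1) (i + 2))))
      w (Pi.single i 1) := by
  have hline : (fun t : ℝ ↦ scaledAngle l i (w + t • Pi.single i 1)) = fun t ↦
      arccos (cosAngle (exp t * scaledLen l w i (i + 1)) (exp t * scaledLen l w i (i + 2))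
        (scaledLen l w (i + 1) (i + 2))) := by
    funext t
    rw [scaledAngle_eq_arccos_cosAngle,
      scaledLen_add_smul_single_self_left (add_one_ne_self i),
      scaledLen_add_smul_single_self_left (add_two_ne_self i),
      scaledLen_add_smul_single_of_ne (add_one_ne_self i) (add_two_ne_self i)]
  rw [HasLineDerivAt, hline]
  exact hasDerivAt_arccos_cosAngle_exp_mul hc ha hb

end Scaled

theorem angle_partial_deriv_self_eq_neg_sum_cot_general
    (l : Fin 3 → Fin 3 → ℝ)
    (hsymm : ∀ i j, l i j = l j i)
    (w : Fin 3 → ℝ)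
    (hw : ∀ i : Fin 3,
      scaledLen l w (i + 1) (i + 2) < scaledLen l w i (i + 1) + scaledLen l w i (i + 2))
    (i j k : Fin 3) (hij : i ≠ j) (hjk : j ≠ k) (hik : i ≠ k) :
    DifferentiableAt ℝ (scaledAngle l i) w ∧
    fderiv ℝ (scaledAngle l i) w (Pi.single i 1)
      = -(Real.cot (scaledAngle l j w) + Real.cot (scaledAngle l k w)) := by
  obtain ⟨hc, ha, hb⟩ := scaledLen_triangle hsymm hw i
  have hdiff := differentiableAt_scaledAngle hc ha hb
  have hderiv : fderiv ℝ (scaledAngle l i) w (Pi.single i 1)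
      = -(cot (scaledAngle l (i + 1) w) + cot (scaledAngle l (i + 2) w)) := by
    rw [(hdiff.hasFDerivAt.hasLineDerivAt _).unique (hasLineDerivAt_scaledAngle hc ha hb),
      scaledAngle_add_one hsymm, scaledAngle_add_two hsymm]
    set a := scaledLen l w i (i + 1)
    set b := scaledLen l w i (i + 2)
    set c := scaledLen l w (i + 1) (i + 2)
    rw [cot_arccos_cosAngle (by linarith) (by linarith) (by linarith),
      cot_arccos_cosAngle (by linarith) (by linarith) (by linarith),
      heron_rotate a b c, ← heron_rotate c a b]
    ring
  rcases eq_add_one_and_eq_add_two_or hij hjk hik with ⟨rfl, rfl⟩ | ⟨rfl, rfl⟩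
  · exact ⟨hdiff, hderiv⟩
  · exact ⟨hdiff, by rw [hderiv, add_comm]⟩

theorem angle_partial_deriv_self_eq_neg_sum_cot
    (l : Fin 3 → Fin 3 → ℝ)
    (hsymm : ∀ i j, l i j = l j i)
    (hpos : ∀ i j, i ≠ j → 0 < l i j)
    (htri : ∀ i : Fin 3, l (i + 1) (i + 2) < l i (i + 1) + l i (i + 2))
    (w : Fin 3 → ℝ)
    (hw : ∀ i : Fin 3,
      scaledLen l w (i + 1) (i + 2) < scaledLen l w i (i + 1) + scaledLen l w i (i + 2))
    (i j k : Fin 3) (hij : i ≠ j) (hjk : j ≠ k) (hik : i ≠ k) :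
    DifferentiableAt ℝ (scaledAngle l i) w ∧
    fderiv ℝ (scaledAngle l i) w (Pi.single i 1)
      = -(Real.cot (scaledAngle l j w) + Real.cot (scaledAngle l k w)) :=
  angle_partial_deriv_self_eq_neg_sum_cot_general l hsymm w hw i j k hij hjk hik
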